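/- arXiv:2306.02931 — 2 statements merged into one kernel-verified Lean document; each statement's English description precedes it below -/
import Mathlib

section
/- Let C₁ be a measurable space, let Θ and Φ be measurable spaces, let δ₂ : Θ × Φ → Z be a measurable embedding into a measurable space Z, let γ : C₁ → Θ × Φ be measurable, and set δ₁ = δ₂ ∘ γ. Let π₁ be a probability measure on C₁, and let π₂ = ν ⊗ ρ be a product probability measure on Θ × Φ. If (δ₁)_#π₁ = (δ₂)_#π₂, then γ_#π₁ = ν ⊗ ρ; in particular the pushforward prior γ_#π₁ is a product (separable) measure on Θ × Φ. -/
open MeasureTheory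

theorem map_prior_eq_prod_of_pushforward_eq_general
    {C₁ Θ Φ Z : Type*} [MeasurableSpace C₁] [MeasurableSpace Θ] [MeasurableSpace Φ]
    [MeasurableSpace Z]
    (δ₂ : Θ × Φ → Z) (hδ₂ : MeasurableEmbedding δ₂)
    (γ : C₁ → Θ × Φ) (hγ : Measurable γ)
    (δ₁ : C₁ → Z) (hδ₁ : δ₁ = δ₂ ∘ γ)
    (π₁ : Measure C₁)
    (ν : Measure Θ) (ρ : Measure Φ)
    (heq : π₁.map δ₁ = (ν.prod ρ).map δ₂) :
    π₁.map γ = ν.prod ρ :=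
  hδ₂.map_injective <| by rw [Measure.map_map hδ₂.measurable hγ, ← hδ₁, heq]

/-- Parametrised form: if `δ₂ : Θ × Φ → Z` is a measurable embedding,
`γ : C₁ → Θ × Φ` is measurable, `δ₁ = δ₂ ∘ γ`, the prior `π₂` is a product measure
`ν ⊗ ρ`, and the pushforward data distributions coincide, then `γ_#π₁ = ν ⊗ ρ`,
i.e. the pushforward prior is a product (separable) measure. -/
theorem map_prior_eq_prod_of_pushforward_eq
    {C₁ Θ Φ Z : Type*} [MeasurableSpace C₁] [MeasurableSpace Θ] [MeasurableSpace Φ]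
    [MeasurableSpace Z]
    (δ₂ : Θ × Φ → Z) (hδ₂ : MeasurableEmbedding δ₂)
    (γ : C₁ → Θ × Φ) (hγ : Measurable γ)
    (δ₁ : C₁ → Z) (hδ₁ : δ₁ = δ₂ ∘ γ)
    (π₁ : Measure C₁) [IsProbabilityMeasure π₁]
    (ν : Measure Θ) (ρ : Measure Φ)
    [IsProbabilityMeasure ν] [IsProbabilityMeasure ρ]
    (heq : π₁.map δ₁ = (ν.prod ρ).map δ₂) :
    π₁.map γ = ν.prod ρ :=
  map_prior_eq_prod_of_pushforward_eq_general δ₂ hδ₂ γ hγ δ₁ hδ₁ π₁ ν ρ heq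
end

section
/- Let W be a real symmetric positive definite 2×2 matrix, let γ > 0, and let η = (η₁, η₂) ∈ ℝ². Define the bivariate Gaussian density with mean η and precision matrix W/γ by p(μ) = √(det W)/(2πγ)·exp(−(1/(2γ))·(μ − η)ᵀ W (μ − η)) for μ = (μ₁, μ₂) ∈ ℝ². Then for all v₁, v₂ ∈ ℝ: p(v₁, v₂ − (W₁₂/W₂₂)·v₁) = N(v₁; η₁, γ·(W₁₁ − W₁₂²/W₂₂)^{-1}) · N(v₂; η₂ + (W₁₂/W₂₂)·η₁, γ/W₂₂), where N(z; m, v) = (2πv)^{-1/2}·exp(−(z − m)²/(2v)). In particular, under the bivariate Gaussian with mean η and covariance γW^{-1}, the random variables μ₁ and μ₂ + (W₁₂/W₂₂)·μ₁ are independent, with μ₁ ~ N(η₁, γ(W₁₁ − W₁₂²/W₂₂)^{-1}) and μ₂ + (W₁₂/W₂₂)μ₁ ~ N(η₂ + (W₁₂/W₂₂)η₁, γ/W₂₂). -/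
open Real Matrix

/-- The one-dimensional Gaussian density `N(z; m, v) = (2πv)^{-1/2} exp(−(z−m)²/(2v))`. -/
noncomputable def gaussDensity (z m v : ℝ) : ℝ :=
  (Real.sqrt (2 * π * v))⁻¹ * Real.exp (-(z - m) ^ 2 / (2 * v))

/-- The bivariate Gaussian density with mean `η = (η₁, η₂)` and precision matrix `W/γ`:
`p(μ) = √(det W)/(2πγ) · exp(−(1/(2γ))·(μ − η)ᵀ W (μ − η))`. -/
noncomputable def bivariateGaussDensity (W : Matrix (Fin 2) (Fin 2) ℝ)
    (γ η₁ η₂ m₁ m₂ : ℝ) : ℝ :=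
  Real.sqrt W.det / (2 * π * γ) *
    Real.exp (-(1 / (2 * γ)) * (![m₁ - η₁, m₂ - η₂] ⬝ᵥ W.mulVec ![m₁ - η₁, m₂ - η₂]))

/-- separability of the normal part of the normal–Wishart prior in the
BGe model. For a symmetric positive definite `W`, `γ > 0` and `η = (η₁, η₂)`:
`p(v₁, v₂ − (W₁₂/W₂₂)v₁) = N(v₁; η₁, γ(W₁₁ − W₁₂²/W₂₂)⁻¹) · N(v₂; η₂ + (W₁₂/W₂₂)η₁, γ/W₂₂)`,
so `μ₁` and `μ₂ + (W₁₂/W₂₂)μ₁` are independent Gaussians under `N(η, γW⁻¹)`. -/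
theorem normalWishart_separable
    (W : Matrix (Fin 2) (Fin 2) ℝ) (hsymm : W.IsSymm) (hpos : W.PosDef)
    (γ : ℝ) (hγ : 0 < γ) (η₁ η₂ : ℝ) (v₁ v₂ : ℝ) :
    bivariateGaussDensity W γ η₁ η₂ v₁ (v₂ - (W 0 1 / W 1 1) * v₁) =
      gaussDensity v₁ η₁ (γ * (W 0 0 - (W 0 1) ^ 2 / W 1 1)⁻¹) *
        gaussDensity v₂ (η₂ + (W 0 1 / W 1 1) * η₁) (γ / W 1 1) := by
  unfold bivariateGaussDensity gaussDensity
  have hW10 : W 1 0 = W 0 1 := by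
    have := congrFun (congrFun hsymm 1) 0
    simpa using this.symm
  have hquad : ∀ x y : ℝ, ![x, y] ⬝ᵥ W.mulVec ![x, y] =
      W 0 0 * x ^ 2 + 2 * W 0 1 * x * y + W 1 1 * y ^ 2 := by
    intro x y
    simp [Matrix.mulVec, dotProduct, Fin.sum_univ_two, hW10]
    ring
  set a := W 0 0 with ha
  set b := W 0 1 with hb
  set c := W 1 1 with hc
  have hcpos : 0 < c := by
    have := hpos.dotProduct_mulVec_pos (x := ![0,1]) (by intro h; simpa using congrFun h 1)
    simpa [Matrix.mulVec, dotProduct, Fin.sum_univ_two, hc] using this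
  have hdet : W.det = a * c - b ^ 2 := by
    rw [Matrix.det_fin_two, hW10]; ring
  have hdetpos : 0 < a * c - b ^ 2 := hdet ▸ hpos.det_pos
  have hschur : 0 < a - b ^ 2 / c := by
    rw [sub_pos, div_lt_iff₀ hcpos]; nlinarith
  have hπ : 0 < π := Real.pi_pos
  have hexp : -(1 / (2 * γ)) * (![v₁ - η₁, (v₂ - (b / c) * v₁) - η₂] ⬝ᵥ W.mulVec ![v₁ - η₁, (v₂ - (b / c) * v₁) - η₂]) =
      -(v₁ - η₁) ^ 2 / (2 * (γ * (a - b ^ 2 / c)⁻¹)) + -(v₂ - (η₂ + (b / c) * η₁)) ^ 2 / (2 * (γ / c)) := by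
    rw [hquad]
    field_simp
    ring
  have hcoef : Real.sqrt W.det / (2 * π * γ) =
      (Real.sqrt (2 * π * (γ * (a - b ^ 2 / c)⁻¹)))⁻¹ * (Real.sqrt (2 * π * (γ / c)))⁻¹ := by
    rw [← Real.sqrt_inv, ← Real.sqrt_inv, ← Real.sqrt_mul (by positivity), hdet]
    have h1 : (2 * π * (γ * (a - b ^ 2 / c)⁻¹))⁻¹ * (2 * π * (γ / c))⁻¹
        = (a * c - b ^ 2) / (2 * π * γ) ^ 2 := by
      field_simp
    rw [h1, Real.sqrt_div hdetpos.le, Real.sqrt_sq (by positivity)]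
  rw [hexp, hcoef, Real.exp_add]
  ring
end
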